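/- Let m/n ∈ (0,1/2) be in lowest terms with m > 1, let u/v = LFP(m/n) and p/q = RFP(m/n), let 0 = k₁ < ⋯ < k_α = m-1 be the m/n-admissible integers, and fix i < α. Let R = O_{m/n}[m, k_{i+1} + n - m], S = O_{m/n}[k_{i+1}, k_i + n - m], T = O_{m/n}[k_i, 0]. Then R, S, T are pairwise disjoint, their union is ℤ/nℤ, and #T = vᵢ, #S = v_{i+1} - vᵢ, #R = n - v_{i+1}, where (u₁/v₁,…,u_α/v_α) is the left Farey sequence of m/n. -/
import Mathlib


/-- The least κ ≥ 0 with r + κm ≡ s (mod n). -/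
noncomputable def kappaLeast (n m r s : ℕ) : ℕ :=
  sInf {j : ℕ | ((r + j * m : ℕ) : ZMod n) = (s : ZMod n)}

/-- The orbit segment O_{m/n}[r,s]. -/
noncomputable def orbSeg (n m r s : ℕ) : Finset (ZMod n) :=
  (Finset.range (kappaLeast n m r s + 1)).image (fun j => ((r + j * m : ℕ) : ZMod n))

/-- k ∈ {0,…,m-1} is m/n-admissible if [k+1,m-1] ∩ O_{m/n}[k,0] = ∅. -/
def IsAdmissible (m n k : ℕ) : Prop :=
  ∀ r : ℕ, k + 1 ≤ r → r ≤ m - 1 → ((r : ZMod n) ∉ orbSeg n m k 0)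

section aux
variable {n m v : ℕ} [NeZero n]

lemma kappaLeast_eq (hmv : (m : ZMod n) * v = 1) (r s : ℕ) :
    kappaLeast n m r s = (((s : ZMod n) - r) * v).val := by
  set c := (((s : ZMod n) - r) * v).val with hc
  have hcv : ((c : ℕ) : ZMod n) = ((s : ZMod n) - r) * v := ZMod.natCast_rightInverse _
  have hmem : c ∈ {j : ℕ | ((r + j * m : ℕ) : ZMod n) = (s : ZMod n)} := by
    simp only [Set.mem_setOf_eq]
    push_cast
    rw [hcv]
    linear_combination ((s : ZMod n) - (r : ZMod n)) * hmv
  have hmin : ∀ j ∈ {j : ℕ | ((r + j * m : ℕ) : ZMod n) = (s : ZMod n)}, c ≤ j := by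
    intro j hj
    simp only [Set.mem_setOf_eq] at hj
    push_cast at hj
    have hjc : ((j : ℕ) : ZMod n) = ((c : ℕ) : ZMod n) := by
      rw [hcv]
      linear_combination (v : ZMod n) * hj - ((j : ZMod n)) * hmv
    have := (ZMod.natCast_eq_natCast_iff _ _ _).1 hjc
    have hcn : c < n := ZMod.val_lt _
    have : j % n = c % n := this
    have : c % n = c := Nat.mod_eq_of_lt hcn
    have := Nat.mod_le j n
    omega
  have h1 : kappaLeast n m r s ≤ c := Nat.sInf_le hmem
  have h2 : c ≤ kappaLeast n m r s := hmin _ (Nat.sInf_mem ⟨c, hmem⟩)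
  omega

lemma orbSeg_mem (hmv : (m : ZMod n) * v = 1) (r s : ℕ) (x : ZMod n) :
    x ∈ orbSeg n m r s ↔ ((x - r) * v).val ≤ (((s : ZMod n) - r) * v).val := by
  rw [orbSeg, kappaLeast_eq hmv, Finset.mem_image]
  constructor
  · rintro ⟨j, hj, rfl⟩
    rw [Finset.mem_range] at hj
    have h1 : ((((r + j * m : ℕ) : ZMod n) - r) * v) = ((j : ℕ) : ZMod n) := by
      push_cast
      linear_combination (j : ZMod n) * hmv
    rw [h1, ZMod.val_natCast]
    have := Nat.mod_le j n
    omega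
  · intro h
    refine ⟨((x - r) * v).val, Finset.mem_range.2 (by omega), ?_⟩
    push_cast
    rw [ZMod.natCast_rightInverse]
    linear_combination (x - (r : ZMod n)) * hmv

lemma orbSeg_card (hmv : (m : ZMod n) * v = 1) (r s : ℕ) :
    (orbSeg n m r s).card = (((s : ZMod n) - r) * v).val + 1 := by
  rw [orbSeg, kappaLeast_eq hmv, Finset.card_image_of_injOn, Finset.card_range]
  intro j1 h1 j2 h2 he
  simp only [Finset.mem_coe, Finset.mem_range] at h1 h2
  have hκ : (((s : ZMod n) - r) * v).val < n := ZMod.val_lt _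
  push_cast at he
  have hj : ((j1 : ℕ) : ZMod n) = ((j2 : ℕ) : ZMod n) := by
    linear_combination (v : ZMod n) * he - ((j1 : ZMod n) - (j2 : ZMod n)) * hmv
  have := congrArg ZMod.val hj
  rwa [ZMod.val_cast_of_lt (by omega), ZMod.val_cast_of_lt (by omega)] at this

end aux

set_option maxHeartbeats 1000000 in
/-- R = O[m, k_{i+1}+n-m], S = O[k_{i+1}, k_i+n-m], T = O[k_i, 0]
are pairwise disjoint, cover ℤ/nℤ, and #T = vᵢ, #S = v_{i+1} - vᵢ,
#R = n - v_{i+1}. -/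
theorem RST_partition (m n u v p q : ℕ)
    (hm : 1 < m) (h2 : 2 * m < n) (hmn : Nat.Coprime m n)
    (hv0 : 0 < v) (hvn : v < n) (huv : Nat.Coprime u v)
    (hlfp : (m : ℤ) * v - (n : ℤ) * u = 1)
    (hq0 : 0 < q) (hqn : q < n) (hpq : Nat.Coprime p q)
    (hrfp : (q : ℤ) * m = (n : ℤ) * p - 1)
    (α : ℕ) (hα : 1 ≤ α) (useq vseq : ℕ → ℕ)
    (hu1 : useq 1 = 0) (hv1 : vseq 1 = 1)
    (hcop : ∀ i, 1 ≤ i → i ≤ α → Nat.Coprime (useq i) (vseq i))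
    (hlast : useq α = u ∧ vseq α = v)
    (hstep : ∀ i, 1 ≤ i → i < α →
      (useq (i + 1) : ℤ) * vseq i - (vseq (i + 1) : ℤ) * useq i = 1 ∧ vseq i < vseq (i + 1))
    (k : ℕ → ℕ)
    (hk1 : k 1 = 0) (hkα : k α = m - 1)
    (hkmono : ∀ i j, 1 ≤ i → i < j → j ≤ α → k i < k j)
    (hkadm : ∀ i, 1 ≤ i → i ≤ α → k i < m ∧ IsAdmissible m n (k i))
    (hkall : ∀ j, j < m → IsAdmissible m n j → ∃ i, 1 ≤ i ∧ i ≤ α ∧ k i = j)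
    (i : ℕ) (hi1 : 1 ≤ i) (hiα : i < α) :
    Disjoint (orbSeg n m m (k (i + 1) + n - m)) (orbSeg n m (k (i + 1)) (k i + n - m)) ∧
    Disjoint (orbSeg n m m (k (i + 1) + n - m)) (orbSeg n m (k i) 0) ∧
    Disjoint (orbSeg n m (k (i + 1)) (k i + n - m)) (orbSeg n m (k i) 0) ∧
    (∀ x : ZMod n, x ∈ orbSeg n m m (k (i + 1) + n - m) ∪
        orbSeg n m (k (i + 1)) (k i + n - m) ∪ orbSeg n m (k i) 0) ∧
    (orbSeg n m (k i) 0).card = vseq i ∧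
    (orbSeg n m (k (i + 1)) (k i + n - m)).card = vseq (i + 1) - vseq i ∧
    (orbSeg n m m (k (i + 1) + n - m)).card = n - vseq (i + 1) := by
  have hn0 : 0 < n := by omega
  haveI : NeZero n := ⟨by omega⟩
  have hmv : (m : ZMod n) * v = 1 := by
    have h : (((m : ℤ) * v - (n : ℤ) * u : ℤ) : ZMod n) = 1 := by rw [hlfp]; norm_num
    push_cast at h
    rw [ZMod.natCast_self] at h
    linear_combination h
  -- monotonicity of vseq
  have hvmono : ∀ b, b ≤ α → ∀ a, 1 ≤ a → a < b → vseq a < vseq b := by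
    intro b
    induction b with
    | zero => intro _ a _ h; omega
    | succ b ih =>
      intro hb a ha hab
      rcases Nat.lt_or_ge a b with h | h
      · exact lt_trans (ih (by omega) a ha h) (hstep b (by omega) (by omega)).2
      · have hab' : a = b := by omega
        subst hab'
        exact (hstep a ha (by omega)).2
  have hv1' : ∀ j, 1 ≤ j → j ≤ α → 1 ≤ vseq j := by
    intro j h1 h2
    rcases Nat.eq_or_lt_of_le h1 with h | h
    · rw [← h, hv1]
    · have := hvmono j h2 1 le_rfl h; omega
  have hvle : ∀ j, 1 ≤ j → j ≤ α → vseq j ≤ v := by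
    intro j h1 h2
    rcases Nat.eq_or_lt_of_le h2 with h | h
    · rw [h, hlast.2]
    · have := hvmono α le_rfl j h1 h; omega
  have hvn' : ∀ j, 1 ≤ j → j ≤ α → vseq j < n := fun j h1 h2 => lt_of_le_of_lt (hvle j h1 h2) hvn
  -- d sequence
  set d : ℕ → ℤ := fun j => (m : ℤ) * vseq j - (n : ℤ) * useq j with hd
  have hdα : d α = 1 := by simp only [hd, hlast.1, hlast.2]; linarith
  have hd1m : d 1 = (m : ℤ) := by simp only [hd, hu1, hv1]; push_cast; ring
  have hstar : ∀ j, 1 ≤ j → j < α → d j * vseq (j+1) - d (j+1) * vseq j = (n : ℤ) := by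
    intro j h1 h2
    have hdet := (hstep j h1 h2).1
    simp only [hd]
    linear_combination (n : ℤ) * hdet
  have hdv : ∀ j, ((d j : ℤ) : ZMod n) * v = (vseq j : ZMod n) := by
    intro j
    simp only [hd]
    push_cast
    rw [ZMod.natCast_self]
    linear_combination (vseq j : ZMod n) * hmv
  -- base case facts
  have hbase : 1 ≤ d α ∧ d α ≤ (n : ℤ) ∧
      (∀ e : ℕ, 1 ≤ e → (e : ℤ) < d α → vseq α < ((e * v : ℕ) : ZMod n).val) := by
    refine ⟨by rw [hdα], by rw [hdα]; exact_mod_cast hn0, ?_⟩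
    intro e he1 he2
    rw [hdα] at he2
    omega
  -- D derivation from C at j+1
  have hDgen : ∀ j, 1 ≤ j → j < α →
      (1 ≤ d (j+1) ∧ d (j+1) ≤ (n : ℤ) ∧
        (∀ e : ℕ, 1 ≤ e → (e : ℤ) < d (j+1) → vseq (j+1) < ((e * v : ℕ) : ZMod n).val)) →
      1 ≤ d j → d (j+1) < d j := by
    intro j h1 h2 IH hdj1
    have b3 : vseq j < vseq (j+1) := (hstep j h1 h2).2
    have hvjn : vseq j < n := hvn' j h1 (by omega)
    have hvj1n : vseq (j+1) < n := hvn' (j+1) (by omega) (by omega)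
    rcases lt_trichotomy (d j) (d (j+1)) with h | h | h
    · exfalso
      have he1 : 1 ≤ (d j).toNat := by omega
      have he2 : (((d j).toNat : ℕ) : ℤ) < d (j+1) := by omega
      have hC := IH.2.2 (d j).toNat he1 he2
      have hcast : (((d j).toNat * v : ℕ) : ZMod n) = (vseq j : ZMod n) := by
        push_cast
        have h3 : (((d j).toNat : ℕ) : ZMod n) = (((d j).toNat : ℤ) : ZMod n) :=
          (Int.cast_natCast _).symm
        rw [h3, Int.toNat_of_nonneg (by omega)]
        exact hdv j
      rw [hcast, ZMod.val_cast_of_lt hvjn] at hC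
      omega
    · exfalso
      have hveq : (vseq j : ZMod n) = (vseq (j+1) : ZMod n) := by
        rw [← hdv j, ← hdv (j+1), h]
      have := congrArg ZMod.val hveq
      rw [ZMod.val_cast_of_lt hvjn, ZMod.val_cast_of_lt hvj1n] at this
      omega
    · exact h
  -- the main downward induction
  have key : ∀ t j, 1 ≤ j → j ≤ α → α - j ≤ t →
      (1 ≤ d j ∧ d j ≤ (n : ℤ) ∧
        (∀ e : ℕ, 1 ≤ e → (e : ℤ) < d j → vseq j < ((e * v : ℕ) : ZMod n).val)) := by
    intro t
    induction t with
    | zero =>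
      intro j h1 h2 h3
      have hj : j = α := by omega
      rw [hj]; exact hbase
    | succ t ih =>
      intro j h1 h2 h3
      rcases Nat.eq_or_lt_of_le h2 with hj | hj
      · rw [hj]; exact hbase
      · have IH := ih (j+1) (by omega) (by omega) (by omega)
        have star_j := hstar j h1 hj
        have b1 : (1 : ℤ) ≤ (vseq j : ℤ) := by exact_mod_cast hv1' j h1 (by omega)
        have b2 : (1 : ℤ) ≤ (vseq (j+1) : ℤ) := by exact_mod_cast hv1' (j+1) (by omega) (by omega)
        have b3 : ((vseq j : ℕ) : ℤ) < ((vseq (j+1) : ℕ) : ℤ) := by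
          exact_mod_cast (hstep j h1 hj).2
        have hnz : (0 : ℤ) < (n : ℤ) := by exact_mod_cast hn0
        have hdj1 : 1 ≤ d j := by
          by_contra hcon
          push_neg at hcon
          have h4 : d j * vseq (j+1) ≤ 0 :=
            mul_nonpos_of_nonpos_of_nonneg (by omega) (by linarith)
          have h5 : (0 : ℤ) < d (j+1) * vseq j := mul_pos (by linarith [IH.1]) (by linarith)
          linarith
        have hdjn : d j ≤ (n : ℤ) := by
          have t1 : (0 : ℤ) ≤ ((n : ℤ) - d (j+1)) * vseq j :=
            mul_nonneg (by linarith [IH.2.1]) (by linarith)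
          have t2 : (0 : ℤ) ≤ (n : ℤ) * ((vseq (j+1) : ℤ) - vseq j - 1) :=
            mul_nonneg (by linarith only [hnz]) (by linarith only [b3])
          have h4 : d j * vseq (j+1) ≤ (n : ℤ) * vseq (j+1) := by
            linarith only [star_j, t1, t2]
          exact le_of_mul_le_mul_right h4 (by linarith)
        have hD : d (j+1) < d j := hDgen j h1 hj IH hdj1
        refine ⟨hdj1, hdjn, ?_⟩
        intro e he1 he2
        by_contra hw
        push_neg at hw
        set w := ((e * v : ℕ) : ZMod n).val with hwdef
        have hwcast : ((w : ℕ) : ZMod n) = ((e : ℕ) : ZMod n) * ((v : ℕ) : ZMod n) := by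
          rw [hwdef]
          rw [ZMod.natCast_rightInverse ((e * v : ℕ) : ZMod n)]
          push_cast
          ring
        have hen : (e : ℤ) < (n : ℤ) := lt_of_lt_of_le he2 hdjn
        have hw1 : 1 ≤ w := by
          rcases Nat.eq_zero_or_pos w with h0 | h0
          · exfalso
            have hev0 : ((e : ℕ) : ZMod n) * ((v : ℕ) : ZMod n) = 0 := by
              rw [← hwcast, h0]; norm_num
            have he0 : ((e : ℕ) : ZMod n) = 0 := by
              linear_combination (m : ZMod n) * hev0 - ((e : ℕ) : ZMod n) * hmv
            have := (ZMod.natCast_eq_zero_iff e n).1 he0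
            have := Nat.le_of_dvd (by omega) this
            omega
          · exact h0
        have hwn : w < n := ZMod.val_lt _
        have hwvj : w ≤ vseq j := hw
        set A : ℤ := d j * w - (e : ℤ) * vseq j with hA
        set B : ℤ := (e : ℤ) * vseq (j+1) - d (j+1) * w with hB
        have hAz : ((A : ℤ) : ZMod n) = 0 := by
          rw [hA]
          push_cast
          linear_combination ((d j : ℤ) : ZMod n) * hwcast + ((e : ℕ) : ZMod n) * hdv j
        have hBz : ((B : ℤ) : ZMod n) = 0 := by
          rw [hB]
          push_cast
          linear_combination (-((d (j+1) : ℤ) : ZMod n)) * hwcast - ((e : ℕ) : ZMod n) * hdv (j+1)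
        obtain ⟨a, ha⟩ := (ZMod.intCast_zmod_eq_zero_iff_dvd A n).1 hAz
        obtain ⟨b, hb⟩ := (ZMod.intCast_zmod_eq_zero_iff_dvd B n).1 hBz
        have hne : (n : ℤ) ≠ 0 := by omega
        have heq1 : a * d (j+1) + b * d j = (e : ℤ) := by
          have h4 : (n : ℤ) * (a * d (j+1) + b * d j) = (n : ℤ) * (e : ℤ) := by
            linear_combination (-(d (j+1))) * ha + (-(d j)) * hb + (e : ℤ) * star_j
          exact mul_left_cancel₀ hne h4
        have heq2 : a * vseq (j+1) + b * vseq j = (w : ℤ) := by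
          have h4 : (n : ℤ) * (a * vseq (j+1) + b * vseq j) = (n : ℤ) * (w : ℤ) := by
            linear_combination (-(vseq (j+1) : ℤ)) * ha + (-(vseq j : ℤ)) * hb + (w : ℤ) * star_j
          exact mul_left_cancel₀ hne h4
        have hw1' : (1 : ℤ) ≤ (w : ℤ) := by exact_mod_cast hw1
        have hwvj' : (w : ℤ) ≤ (vseq j : ℤ) := by exact_mod_cast hwvj
        have he1' : (1 : ℤ) ≤ (e : ℤ) := by exact_mod_cast he1
        have hd11 : (1 : ℤ) ≤ d (j+1) := IH.1
        rcases le_or_gt a 0 with ha0 | ha0 <;> rcases le_or_gt b 0 with hb0 | hb0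
        · -- a ≤ 0, b ≤ 0 : e ≤ 0
          have t1 : a * d (j+1) ≤ 0 := mul_nonpos_of_nonpos_of_nonneg ha0 (by linarith)
          have t2 : b * d j ≤ 0 := mul_nonpos_of_nonpos_of_nonneg hb0 (by linarith)
          linarith
        · -- a ≤ 0, b ≥ 1 : e ≥ d j
          have hba : 1 ≤ b + a := by
            by_contra hcon
            push_neg at hcon
            have hble : b ≤ -a := by omega
            have t1 : b * vseq j ≤ (-a) * vseq j :=
              mul_le_mul_of_nonneg_right hble (by linarith)
            have t2 : (-a) * vseq j ≤ (-a) * vseq (j+1) :=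
              mul_le_mul_of_nonneg_left (by linarith only [b3]) (by linarith only [ha0])
            linarith only [heq2, hw1', t1, t2]
          have t3 : (-a) * d (j+1) ≤ (-a) * d j :=
            mul_le_mul_of_nonneg_left (by linarith) (by linarith)
          have t4 : (-a) * d j ≤ (b - 1) * d j :=
            mul_le_mul_of_nonneg_right (by omega) (by linarith)
          linarith
        · -- a ≥ 1, b ≤ 0 : e ≤ 0
          have hab : a ≤ -b := by
            by_contra hcon
            push_neg at hcon
            have hage : 1 - b ≤ a := by omega
            have t1 : (1 - b) * vseq (j+1) ≤ a * vseq (j+1) :=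
              mul_le_mul_of_nonneg_right hage (by linarith)
            have t2 : (1 - b) * vseq j < (1 - b) * vseq (j+1) :=
              mul_lt_mul_of_pos_left b3 (by linarith only [hb0])
            linarith only [heq2, hwvj', t1, t2]
          have hbneg : b ≤ -1 := by omega
          have t3 : a * d (j+1) ≤ (-b) * d (j+1) :=
            mul_le_mul_of_nonneg_right hab (by linarith)
          have t4 : (-b) * (d (j+1) - d j) ≤ 1 * (d (j+1) - d j) :=
            mul_le_mul_of_nonpos_right (by omega) (by linarith)
          linarith
        · -- a ≥ 1, b ≥ 1 : e > d j
          have t1 : 1 * d (j+1) ≤ a * d (j+1) :=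
            mul_le_mul_of_nonneg_right (by omega) (by linarith)
          have t2 : 1 * d j ≤ b * d j :=
            mul_le_mul_of_nonneg_right (by omega) (by linarith)
          linarith
  have Pall : ∀ j, 1 ≤ j → j ≤ α →
      (1 ≤ d j ∧ d j ≤ (n : ℤ) ∧
        (∀ e : ℕ, 1 ≤ e → (e : ℤ) < d j → vseq j < ((e * v : ℕ) : ZMod n).val)) :=
    fun j h1 h2 => key (α - j) j h1 h2 le_rfl
  have hdec : ∀ j, 1 ≤ j → j < α → d (j+1) < d j :=
    fun j h1 h2 => hDgen j h1 h2 (Pall (j+1) (by omega) (by omega)) (Pall j h1 (by omega)).1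
  have hdlt : ∀ b, b ≤ α → ∀ a, 1 ≤ a → a < b → d b < d a := by
    intro b
    induction b with
    | zero => intro _ a _ h; omega
    | succ b ih =>
      intro hb a ha hab
      rcases Nat.lt_or_ge a b with h | h
      · exact lt_trans (hdec b (by omega) (by omega)) (ih (by omega) a ha h)
      · have hab' : a = b := by omega
        subst hab'
        exact hdec a ha (by omega)
  have hdm : ∀ j, 1 ≤ j → j ≤ α → d j ≤ (m : ℤ) := by
    intro j h1 h2
    rcases Nat.eq_or_lt_of_le h1 with h | h
    · rw [← h, hd1m]
    · have := hdlt j h2 1 le_rfl h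
      rw [hd1m] at this
      linarith
  set kk : ℕ → ℕ := fun j => m - (d j).toNat with hkk
  have hkkc : ∀ j, 1 ≤ j → j ≤ α → ((kk j : ℕ) : ℤ) = (m : ℤ) - d j := by
    intro j h1 h2
    have q1 := (Pall j h1 h2).1
    have q2 := hdm j h1 h2
    simp only [hkk]
    omega
  have hkklt : ∀ j, 1 ≤ j → j ≤ α → kk j < m := by
    intro j h1 h2
    have q1 := (Pall j h1 h2).1
    have := hkkc j h1 h2
    omega
  -- admissibility of kk j
  have hadm : ∀ j, 1 ≤ j → j ≤ α → IsAdmissible m n (kk j) := by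
    intro j h1 h2 r hr1 hr2
    rw [orbSeg_mem hmv]
    have hP := Pall j h1 h2
    have hvj1 : 1 ≤ vseq j := hv1' j h1 h2
    have hvjn : vseq j < n := hvn' j h1 h2
    have hkz : ((kk j : ℕ) : ZMod n) = ((((m : ℤ) - d j) : ℤ) : ZMod n) := by
      rw [← hkkc j h1 h2]
      push_cast
      ring
    have hrhs : (((0 : ℕ) : ZMod n) - ((kk j : ℕ) : ZMod n)) * v
        = (((vseq j - 1 : ℕ)) : ZMod n) := by
      rw [hkz, Nat.cast_sub hvj1]
      push_cast
      linear_combination hdv j - hmv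
    have he1 : 1 ≤ m - r := by omega
    have he2 : ((m - r : ℕ) : ℤ) < d j := by
      have := hkkc j h1 h2
      omega
    have hC := hP.2.2 (m - r) he1 he2
    set w := (((m - r) * v : ℕ) : ZMod n).val with hwdef
    have hwn : w < n := ZMod.val_lt _
    have hwc : ((w : ℕ) : ZMod n) = ((m : ZMod n) - (r : ZMod n)) * v := by
      rw [hwdef, ZMod.natCast_rightInverse (((m - r) * v : ℕ) : ZMod n)]
      rw [Nat.cast_mul, Nat.cast_sub (by omega : r ≤ m)]
    have hlhs : (((r : ℕ) : ZMod n) - ((kk j : ℕ) : ZMod n)) * v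
        = ((vseq j + n - w : ℕ) : ZMod n) := by
      rw [hkz, Nat.cast_sub (by omega : w ≤ vseq j + n)]
      push_cast
      rw [ZMod.natCast_self]
      linear_combination hdv j + hwc
    rw [hlhs, hrhs, ZMod.val_cast_of_lt (by omega : vseq j + n - w < n),
      ZMod.val_cast_of_lt (by omega : vseq j - 1 < n)]
    omega
  -- kk strictly monotone
  have hkkmono : ∀ a b, 1 ≤ a → a < b → b ≤ α → kk a < kk b := by
    intro a b ha hab hb
    have q1 := (Pall b (by omega) hb).1
    have q2 := hdlt b hb a ha hab
    have q3 := hdm a ha (by omega)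
    simp only [hkk]
    omega
  -- k injective / order reflecting
  have hkrefl : ∀ a b, 1 ≤ a → a ≤ α → 1 ≤ b → b ≤ α → k a < k b → a < b := by
    intro a b ha1 ha2 hb1 hb2 hab
    by_contra hcon
    push_neg at hcon
    rcases Nat.eq_or_lt_of_le hcon with h | h
    · rw [h] at hab; omega
    · have := hkmono b a hb1 h ha2; omega
  have hkinj : ∀ a b, 1 ≤ a → a ≤ α → 1 ≤ b → b ≤ α → k a = k b → a = b := by
    intro a b ha1 ha2 hb1 hb2 hab
    rcases lt_trichotomy a b with h | h | h
    · have := hkmono a b ha1 h hb2; omega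
    · exact h
    · have := hkmono b a hb1 h ha2; omega
  have hkkinj : ∀ a b, 1 ≤ a → a ≤ α → 1 ≤ b → b ≤ α → kk a = kk b → a = b := by
    intro a b ha1 ha2 hb1 hb2 hab
    rcases lt_trichotomy a b with h | h | h
    · have := hkkmono a b ha1 h hb2; omega
    · exact h
    · have := hkkmono b a hb1 h ha2; omega
  have hsur : ∀ j, 1 ≤ j → j ≤ α → ∃ i', 1 ≤ i' ∧ i' ≤ α ∧ k i' = kk j :=
    fun j h1 h2 => hkall (kk j) (hkklt j h1 h2) (hadm j h1 h2)
  -- set equality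
  have hset : (Finset.Icc 1 α).image k = (Finset.Icc 1 α).image kk := by
    have hsub : (Finset.Icc 1 α).image kk ⊆ (Finset.Icc 1 α).image k := by
      intro x hx
      rw [Finset.mem_image] at hx ⊢
      obtain ⟨j, hj, rfl⟩ := hx
      rw [Finset.mem_Icc] at hj
      obtain ⟨i', h1, h2, h3⟩ := hsur j hj.1 hj.2
      exact ⟨i', Finset.mem_Icc.2 ⟨h1, h2⟩, h3⟩
    have hc1 : ((Finset.Icc 1 α).image k).card = α := by
      rw [Finset.card_image_of_injOn, Nat.card_Icc]
      · omega
      · intro a ha b hb hab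
        rw [Finset.mem_coe, Finset.mem_Icc] at ha hb
        exact hkinj a b ha.1 ha.2 hb.1 hb.2 hab
    have hc2 : ((Finset.Icc 1 α).image kk).card = α := by
      rw [Finset.card_image_of_injOn, Nat.card_Icc]
      · omega
      · intro a ha b hb hab
        rw [Finset.mem_coe, Finset.mem_Icc] at ha hb
        exact hkkinj a b ha.1 ha.2 hb.1 hb.2 hab
    exact (Finset.eq_of_subset_of_card_le hsub (by omega)).symm
  have hsur2 : ∀ i', 1 ≤ i' → i' ≤ α → ∃ j, 1 ≤ j ∧ j ≤ α ∧ kk j = k i' := by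
    intro i' h1 h2
    have : k i' ∈ (Finset.Icc 1 α).image kk := by
      rw [← hset, Finset.mem_image]
      exact ⟨i', Finset.mem_Icc.2 ⟨h1, h2⟩, rfl⟩
    rw [Finset.mem_image] at this
    obtain ⟨j, hj, hjj⟩ := this
    rw [Finset.mem_Icc] at hj
    exact ⟨j, hj.1, hj.2, hjj⟩
  -- lower bound: j ≤ i' whenever k i' = kk j
  have Q : ∀ j, 1 ≤ j → j ≤ α → ∀ i', 1 ≤ i' → i' ≤ α → k i' = kk j → j ≤ i' := by
    intro j
    induction j with
    | zero => omega
    | succ j ihj =>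
      intro h1 h2 i' hi'1 hi'2 he
      rcases Nat.eq_or_lt_of_le h1 with h | h
      · omega
      · obtain ⟨i0, h01, h02, h0e⟩ := hsur j (by omega) (by omega)
        have hj0 : j ≤ i0 := ihj (by omega) (by omega) i0 h01 h02 h0e
        have hlt : k i0 < k i' := by
          rw [h0e, he]
          exact hkkmono j (j+1) (by omega) (by omega) h2
        have := hkrefl i0 i' h01 h02 hi'1 hi'2 hlt
        omega
  have Q' : ∀ i', 1 ≤ i' → i' ≤ α → ∀ j, 1 ≤ j → j ≤ α → kk j = k i' → i' ≤ j := by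
    intro i'
    induction i' with
    | zero => omega
    | succ i' ihi =>
      intro h1 h2 j hj1 hj2 he
      rcases Nat.eq_or_lt_of_le h1 with h | h
      · omega
      · obtain ⟨j0, h01, h02, h0e⟩ := hsur2 i' (by omega) (by omega)
        have hj0 : i' ≤ j0 := ihi (by omega) (by omega) j0 h01 h02 h0e
        have hlt : kk j0 < kk j := by
          rw [h0e, he]
          exact hkmono i' (i'+1) (by omega) (by omega) h2
        have : j0 < j := by
          by_contra hcon
          push_neg at hcon
          rcases Nat.eq_or_lt_of_le hcon with hh | hh
          · rw [hh] at hlt; omega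
          · have := hkkmono j j0 hj1 hh h02; omega
        omega
  have hkeq : ∀ j, 1 ≤ j → j ≤ α → k j = kk j := by
    intro j h1 h2
    obtain ⟨i', hi'1, hi'2, he⟩ := hsur j h1 h2
    have hle1 := Q j h1 h2 i' hi'1 hi'2 he
    have hle2 := Q' i' hi'1 hi'2 j h1 h2 he.symm
    have hij : i' = j := by omega
    exact hij ▸ he
  -- specific index facts
  have hi2 : i + 1 ≤ α := hiα
  have hd_i : 1 ≤ d i := (Pall i hi1 (by omega)).1
  have hd_i1 : 1 ≤ d (i+1) := (Pall (i+1) (by omega) hi2).1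
  have hdmi : d i ≤ (m:ℤ) := hdm i hi1 (by omega)
  have hdmi1 : d (i+1) ≤ (m:ℤ) := hdm (i+1) (by omega) hi2
  have hkc_i : ((k i : ℕ) : ℤ) = (m:ℤ) - d i := by
    rw [hkeq i hi1 (by omega)]; exact hkkc i hi1 (by omega)
  have hkc_i1 : ((k (i+1) : ℕ) : ℤ) = (m:ℤ) - d (i+1) := by
    rw [hkeq (i+1) (by omega) hi2]; exact hkkc (i+1) (by omega) hi2
  have hvi1 : 1 ≤ vseq i := hv1' i hi1 (by omega)
  have hvin : vseq i < n := hvn' i hi1 (by omega)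
  have hvi11 : 1 ≤ vseq (i+1) := hv1' (i+1) (by omega) hi2
  have hvi1n : vseq (i+1) < n := hvn' (i+1) (by omega) hi2
  have hvlt : vseq i < vseq (i+1) := (hstep i hi1 hiα).2
  -- cast identities
  have hKi : ((k i : ℕ) : ZMod n) = (((m : ℤ) - d i : ℤ) : ZMod n) := by
    rw [← hkc_i]; push_cast; ring
  have hKi1 : ((k (i+1) : ℕ) : ZMod n) = (((m : ℤ) - d (i+1) : ℤ) : ZMod n) := by
    rw [← hkc_i1]; push_cast; ring
  have hKS : ((k i + n - m : ℕ) : ZMod n) = ((((n:ℤ) - d i) : ℤ) : ZMod n) := by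
    have hz : ((k i + n - m : ℕ) : ℤ) = (n:ℤ) - d i := by omega
    rw [← hz]; push_cast; ring
  have hKR : ((k (i+1) + n - m : ℕ) : ZMod n) = ((((n:ℤ) - d (i+1)) : ℤ) : ZMod n) := by
    have hz : ((k (i+1) + n - m : ℕ) : ℤ) = (n:ℤ) - d (i+1) := by omega
    rw [← hz]; push_cast; ring
  -- κ-elements
  have hET : ((((0:ℕ)) : ZMod n) - ((k i : ℕ) : ZMod n)) * v = ((vseq i - 1 : ℕ) : ZMod n) := by
    rw [hKi, Nat.cast_sub hvi1]
    push_cast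
    linear_combination hdv i - hmv
  have hES : (((k i + n - m : ℕ) : ZMod n) - ((k (i+1) : ℕ) : ZMod n)) * v
      = ((vseq (i+1) - vseq i - 1 : ℕ) : ZMod n) := by
    rw [hKS, hKi1, Nat.cast_sub (by omega : 1 ≤ vseq (i+1) - vseq i),
      Nat.cast_sub (le_of_lt hvlt)]
    push_cast
    rw [ZMod.natCast_self]
    linear_combination hdv (i+1) - hdv i - hmv
  have hER : (((k (i+1) + n - m : ℕ) : ZMod n) - ((m : ℕ) : ZMod n)) * v
      = ((n - vseq (i+1) - 1 : ℕ) : ZMod n) := by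
    rw [hKR, Nat.cast_sub (by omega : 1 ≤ n - vseq (i+1)),
      Nat.cast_sub (le_of_lt hvi1n)]
    push_cast
    rw [ZMod.natCast_self]
    linear_combination - hdv (i+1) - hmv
  -- membership characterizations
  have hmemT : ∀ x : ZMod n, x ∈ orbSeg n m (k i) 0 ↔
      ((x * v).val + vseq i - 1) % n ≤ vseq i - 1 := by
    intro x
    have hPc : (((x * v).val : ℕ) : ZMod n) = x * v := ZMod.natCast_rightInverse _
    have hPn : (x * v).val < n := ZMod.val_lt _
    have hlx : (x - ((k i : ℕ) : ZMod n)) * v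
        = (((x * v).val + vseq i - 1 : ℕ) : ZMod n) := by
      rw [hKi, Nat.cast_sub (by omega : 1 ≤ (x * v).val + vseq i)]
      push_cast
      linear_combination hdv i - hmv - hPc
    rw [orbSeg_mem hmv, hlx, hET, ZMod.val_natCast,
      ZMod.val_cast_of_lt (by omega : vseq i - 1 < n)]
  have hmemS : ∀ x : ZMod n, x ∈ orbSeg n m (k (i+1)) (k i + n - m) ↔
      ((x * v).val + vseq (i+1) - 1) % n ≤ vseq (i+1) - vseq i - 1 := by
    intro x
    have hPc : (((x * v).val : ℕ) : ZMod n) = x * v := ZMod.natCast_rightInverse _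
    have hPn : (x * v).val < n := ZMod.val_lt _
    have hlx : (x - ((k (i+1) : ℕ) : ZMod n)) * v
        = (((x * v).val + vseq (i+1) - 1 : ℕ) : ZMod n) := by
      rw [hKi1, Nat.cast_sub (by omega : 1 ≤ (x * v).val + vseq (i+1))]
      push_cast
      linear_combination hdv (i+1) - hmv - hPc
    rw [orbSeg_mem hmv, hlx, hES, ZMod.val_natCast,
      ZMod.val_cast_of_lt (by omega : vseq (i+1) - vseq i - 1 < n)]
  have hmemR : ∀ x : ZMod n, x ∈ orbSeg n m m (k (i+1) + n - m) ↔
      ((x * v).val + n - 1) % n ≤ n - vseq (i+1) - 1 := by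
    intro x
    have hPc : (((x * v).val : ℕ) : ZMod n) = x * v := ZMod.natCast_rightInverse _
    have hPn : (x * v).val < n := ZMod.val_lt _
    have hlx : (x - ((m : ℕ) : ZMod n)) * v
        = (((x * v).val + n - 1 : ℕ) : ZMod n) := by
      rw [Nat.cast_sub (by omega : 1 ≤ (x * v).val + n)]
      push_cast
      rw [ZMod.natCast_self]
      linear_combination - hmv - hPc
    rw [orbSeg_mem hmv, hlx, hER, ZMod.val_natCast,
      ZMod.val_cast_of_lt (by omega : n - vseq (i+1) - 1 < n)]
  have hmod : ∀ a : ℕ, a < 2*n → (a < n ∧ a % n = a) ∨ (n ≤ a ∧ a % n + n = a) := by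
    intro a ha
    rcases lt_or_ge a n with h | h
    · exact Or.inl ⟨h, Nat.mod_eq_of_lt h⟩
    · right
      refine ⟨h, ?_⟩
      rw [Nat.mod_eq_sub_mod h, Nat.mod_eq_of_lt (by omega)]
      omega
  refine ⟨?_, ?_, ?_, ?_, ?_, ?_, ?_⟩
  · rw [Finset.disjoint_left]
    intro x hx1 hx2
    rw [hmemR x] at hx1
    rw [hmemS x] at hx2
    have hPn : (x * v).val < n := ZMod.val_lt _
    rcases hmod ((x*v).val + n - 1) (by omega) with h | h <;>
      rcases hmod ((x*v).val + vseq (i+1) - 1) (by omega) with h' | h' <;> omega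
  · rw [Finset.disjoint_left]
    intro x hx1 hx2
    rw [hmemR x] at hx1
    rw [hmemT x] at hx2
    have hPn : (x * v).val < n := ZMod.val_lt _
    rcases hmod ((x*v).val + n - 1) (by omega) with h | h <;>
      rcases hmod ((x*v).val + vseq i - 1) (by omega) with h' | h' <;> omega
  · rw [Finset.disjoint_left]
    intro x hx1 hx2
    rw [hmemS x] at hx1
    rw [hmemT x] at hx2
    have hPn : (x * v).val < n := ZMod.val_lt _
    rcases hmod ((x*v).val + vseq (i+1) - 1) (by omega) with h | h <;>
      rcases hmod ((x*v).val + vseq i - 1) (by omega) with h' | h' <;> omega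
  · intro x
    have hPn : (x * v).val < n := ZMod.val_lt _
    simp only [Finset.mem_union, hmemR x, hmemS x, hmemT x]
    rcases hmod ((x*v).val + n - 1) (by omega) with h | h <;>
      rcases hmod ((x*v).val + vseq (i+1) - 1) (by omega) with h' | h' <;>
      rcases hmod ((x*v).val + vseq i - 1) (by omega) with h'' | h'' <;> omega
  · rw [orbSeg_card hmv, hET, ZMod.val_cast_of_lt (by omega : vseq i - 1 < n)]
    omega
  · rw [orbSeg_card hmv, hES,
      ZMod.val_cast_of_lt (by omega : vseq (i+1) - vseq i - 1 < n)]
    omega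
  · rw [orbSeg_card hmv, hER,
      ZMod.val_cast_of_lt (by omega : n - vseq (i+1) - 1 < n)]
    omega
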